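/- arXiv:1503.01796 — 3 statements merged into one kernel-verified Lean document; each statement's English description precedes it below -/
import Mathlib

section
/- For every natural number k, b₁(k+1) = b₁(k) + b₂(k), i.e. a₁(2^{k+1} − 1) = a₁(2^k − 1) + a₂(2^k − 1). -/
/-!
Over `𝔽₂` we have `1 + x + x² = (1 + x)² + x`, and squaring is `f(x) ↦ f(x²)`. Hence
`(1 + x + x²)^(2n+1) = g(x²) + x·h(x²)` with `g = (1 + x)(1 + x + x²)ⁿ` and `h = (1 + x + x²)ⁿ`.
The two summands are supported on even and odd exponents respectively, so the support of the sum
is a disjoint union of copies of the supports of `g` and `h`. Finally `2(2^k - 1) + 1 = 2^(k+1) - 1`.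
-/

open Polynomial

/-- `a₁ n` : number of nonzero coefficients of `(1+x+x²)ⁿ` over `𝔽₂`. -/
noncomputable def a1 (n : ℕ) : ℕ :=
  (((1 + X + X ^ 2 : (ZMod 2)[X]) ^ n).support).card

/-- `a₂ n` : number of nonzero coefficients of `(1+x)(1+x+x²)ⁿ` over `𝔽₂`. -/
noncomputable def a2 (n : ℕ) : ℕ :=
  (((1 + X) * (1 + X + X ^ 2 : (ZMod 2)[X]) ^ n).support).card

namespace Polynomial

variable {R : Type*}

section Semiring

variable [Semiring R]

lemma card_support_add_of_disjoint {f g : R[X]} (h : Disjoint f.support g.support) :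
    (f + g).support.card = f.support.card + g.support.card := by
  classical
  rw [← Finset.card_union_of_disjoint h, support, toFinsupp_add, AddMonoidAlgebra.coeff_add,
    Finsupp.support_add_eq h]
  rfl

lemma support_X_mul (f : R[X]) :
    (X * f).support = f.support.map ⟨Nat.succ, Nat.succ_injective⟩ := by
  ext (_ | n) <;> simp [coeff_X_mul]

end Semiring

section CommSemiring

variable [CommSemiring R]

lemma support_expand {p : ℕ} (hp : 0 < p) (f : R[X]) :
    (expand R p f).support = f.support.map ⟨(p * ·), mul_right_injective₀ hp.ne'⟩ := by
  ext n
  simp only [mem_support_iff, coeff_expand hp, Finset.mem_map, Function.Embedding.coeFn_mk]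
  constructor
  · intro h
    split_ifs at h with hpn
    · exact ⟨n / p, h, Nat.mul_div_cancel' hpn⟩
    · exact absurd rfl h
  · rintro ⟨m, hm, rfl⟩
    rwa [if_pos (dvd_mul_right p m), Nat.mul_div_cancel_left m hp]

lemma card_support_expand_add_X_mul_expand {p : ℕ} (hp : 1 < p) (f g : R[X]) :
    (expand R p f + X * expand R p g).support.card = f.support.card + g.support.card := by
  have hp₀ : 0 < p := zero_lt_one.trans hp
  have hdisj : Disjoint (expand R p f).support (X * expand R p g).support := by
    simp only [support_X_mul, support_expand hp₀, Finset.map_map, Finset.disjoint_left,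
      Finset.mem_map, Function.Embedding.trans_apply, Function.Embedding.coeFn_mk,
      Nat.succ_eq_add_one]
    rintro _ ⟨a, -, rfl⟩ ⟨b, -, hb⟩
    have : p ∣ 1 := (Nat.dvd_add_right (dvd_mul_right p b)).mp (hb ▸ dvd_mul_right p a)
    exact hp.ne' (Nat.dvd_one.mp this)
  rw [card_support_add_of_disjoint hdisj, support_X_mul, support_expand hp₀, support_expand hp₀]
  simp only [Finset.card_map]

end CommSemiring

section CharTwo

variable [CommRing R] [CharP R 2]

lemma one_add_X_add_X_sq_eq_sq_add_X : (1 + X + X ^ 2 : R[X]) = (1 + X) ^ 2 + X := by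
  linear_combination (-X : R[X]) * CharTwo.two_eq_zero (R := R[X])

lemma one_add_X_add_X_sq_pow_two_mul_add_one (n : ℕ) :
    (1 + X + X ^ 2 : R[X]) ^ (2 * n + 1) =
      ((1 + X) * (1 + X + X ^ 2) ^ n) ^ 2 + X * ((1 + X + X ^ 2) ^ n) ^ 2 := by
  rw [pow_succ, pow_mul', one_add_X_add_X_sq_eq_sq_add_X]
  ring

end CharTwo

end Polynomial

theorem b1_succ (k : ℕ) : a1 (2 ^ (k + 1) - 1) = a1 (2 ^ k - 1) + a2 (2 ^ k - 1) := by
  have hk : 2 ^ (k + 1) - 1 = 2 * (2 ^ k - 1) + 1 := by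
    have := k.one_le_two_pow
    rw [pow_succ]
    omega
  rw [a1, a1, a2, hk, one_add_X_add_X_sq_pow_two_mul_add_one, ← ZMod.expand_card ((1 + X) * _),
    ← ZMod.expand_card (_ ^ (2 ^ k - 1)), card_support_expand_add_X_mul_expand one_lt_two, add_comm]
end

section
/- The generating function of b₁ is (1+2t)/((1+t)(1−2t)); equivalently, in the ring of formal power series over ℤ, (1+t)·(1−2t)·Σ_{k≥0} b₁(k)·t^k = 1 + 2t. -/
open Polynomial

/-!
Over `𝔽₂` squaring is `expand 2`, so with `p = 1 + x + x²` and `Q = p ^ (2 ^ k - 1)`,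
`p ^ (2 ^ (k+1) - 1) = Q(x²) · p = ((1 + x) Q)(x²) + x · Q(x²)`, and
`(1 + x) p ^ (2 ^ (k+1) - 1) = Q(x²) (1 + x³) = Q(x²) + x · (x Q)(x²)`.
A polynomial `f(x²) + x g(x²)` has `#f.support + #g.support` nonzero coefficients, which gives
`b₁(k+1) = a₂(2ᵏ - 1) + b₁(k)` and `a₂(2ᵏ⁺¹ - 1) = 2 b₁(k)`, hence
`b₁(k+2) = b₁(k+1) + 2 b₁(k)` with `b₁(0) = 1`, `b₁(1) = 3`. This recurrence is the
generating-function identity.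
-/

open Finset

lemma card_support_X_mul {R : Type*} [Semiring R] (q : R[X]) : #(X * q).support = #q.support := by
  have : (X * q).support = q.support.image (· + 1) := by
    ext n
    simp only [mem_image, mem_support_iff]
    rcases n with _ | m
    · simp
    · simp [coeff_X_mul]
  rw [this, card_image_of_injective _ (add_left_injective 1)]

section EvenOddSplit

variable {R : Type*} [CommSemiring R] (f g : R[X])

lemma coeff_expand_two_add_X_mul_expand_two_even (m : ℕ) :
    (expand R 2 f + X * expand R 2 g).coeff (2 * m) = f.coeff m := by
  rw [coeff_add, coeff_expand_mul' two_pos]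
  rcases m with _ | m
  · simp
  · rw [show 2 * (m + 1) = (2 * m + 1) + 1 by ring, coeff_X_mul, coeff_expand two_pos]
    simp [show ¬ 2 ∣ 2 * m + 1 by omega]

lemma coeff_expand_two_add_X_mul_expand_two_odd (m : ℕ) :
    (expand R 2 f + X * expand R 2 g).coeff (2 * m + 1) = g.coeff m := by
  rw [coeff_add, coeff_X_mul, coeff_expand_mul' two_pos, coeff_expand two_pos]
  simp [show ¬ 2 ∣ 2 * m + 1 by omega]

lemma support_expand_two_add_X_mul_expand_two :
    (expand R 2 f + X * expand R 2 g).support =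
      f.support.image (2 * ·) ∪ g.support.image (2 * · + 1) := by
  ext n
  simp only [mem_union, mem_image, mem_support_iff]
  obtain ⟨m, rfl | rfl⟩ := Nat.even_or_odd' n
  · rw [coeff_expand_two_add_X_mul_expand_two_even]
    refine ⟨fun h => Or.inl ⟨m, h, rfl⟩, ?_⟩
    rintro (⟨m', h, hm'⟩ | ⟨m', -, hm'⟩)
    · rwa [show m = m' by omega]
    · omega
  · rw [coeff_expand_two_add_X_mul_expand_two_odd]
    refine ⟨fun h => Or.inr ⟨m, h, rfl⟩, ?_⟩
    rintro (⟨m', -, hm'⟩ | ⟨m', h, hm'⟩)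
    · omega
    · rwa [show m = m' by omega]

lemma card_support_expand_two_add_X_mul_expand_two :
    #(expand R 2 f + X * expand R 2 g).support = #f.support + #g.support := by
  rw [support_expand_two_add_X_mul_expand_two, card_union_of_disjoint,
    card_image_of_injective _ (fun a b h => by omega),
    card_image_of_injective _ (fun a b h => by omega)]
  simp only [disjoint_left, mem_image]
  rintro n ⟨m, -, rfl⟩ ⟨m', -, h⟩
  omega

end EvenOddSplit

lemma trinomial_pow_two_pow_succ_sub_one (k : ℕ) :
    (1 + X + X ^ 2 : (ZMod 2)[X]) ^ (2 ^ (k + 1) - 1) =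
      expand (ZMod 2) 2 ((1 + X + X ^ 2) ^ (2 ^ k - 1)) * (1 + X + X ^ 2) := by
  have : 2 ^ (k + 1) - 1 = 2 * (2 ^ k - 1) + 1 := by
    have := Nat.one_le_two_pow (n := k)
    omega
  rw [this, ZMod.expand_card, ← pow_mul, mul_comm, pow_succ]

lemma a1_two_pow_succ_sub_one (k : ℕ) :
    a1 (2 ^ (k + 1) - 1) = a2 (2 ^ k - 1) + a1 (2 ^ k - 1) := by
  set Q : (ZMod 2)[X] := (1 + X + X ^ 2) ^ (2 ^ k - 1)
  have : (1 + X + X ^ 2 : (ZMod 2)[X]) ^ (2 ^ (k + 1) - 1) =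
      expand (ZMod 2) 2 ((1 + X) * Q) + X * expand (ZMod 2) 2 Q := by
    rw [trinomial_pow_two_pow_succ_sub_one, map_mul, map_add, map_one, expand_X]
    ring
  rw [a1, this, card_support_expand_two_add_X_mul_expand_two, a2, a1]

lemma a2_two_pow_succ_sub_one (k : ℕ) :
    a2 (2 ^ (k + 1) - 1) = 2 * a1 (2 ^ k - 1) := by
  set Q : (ZMod 2)[X] := (1 + X + X ^ 2) ^ (2 ^ k - 1)
  have : (1 + X) * (1 + X + X ^ 2 : (ZMod 2)[X]) ^ (2 ^ (k + 1) - 1) =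
      expand (ZMod 2) 2 Q + X * expand (ZMod 2) 2 (X * Q) := by
    rw [trinomial_pow_two_pow_succ_sub_one, map_mul, expand_X]
    linear_combination (X + X ^ 2) * expand (ZMod 2) 2 Q * CharTwo.two_eq_zero (R := (ZMod 2)[X])
  rw [a2, this, card_support_expand_two_add_X_mul_expand_two, card_support_X_mul, ← a1, two_mul]

lemma a1_two_pow_add_two_sub_one (k : ℕ) :
    a1 (2 ^ (k + 2) - 1) = a1 (2 ^ (k + 1) - 1) + 2 * a1 (2 ^ k - 1) := by
  rw [a1_two_pow_succ_sub_one (k + 1), a2_two_pow_succ_sub_one, add_comm]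

lemma a1_zero : a1 0 = 1 := by
  rw [a1, pow_zero, ← C_1, support_C one_ne_zero, card_singleton]

lemma a1_one : a1 1 = 3 := by
  rw [a1, pow_one, show (1 + X + X ^ 2 : (ZMod 2)[X]) = C 1 * X ^ 0 + C 1 * X ^ 1 + C 1 * X ^ 2 by
    simp, card_support_trinomial (by norm_num) (by norm_num) one_ne_zero one_ne_zero one_ne_zero]

lemma PowerSeries.one_sub_X_sub_C_mul_X_sq_mul_mk {R : Type*} [CommRing R] (c : R) (b : ℕ → R)
    (hb : ∀ n, b (n + 2) = b (n + 1) + c * b n) :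
    (1 - X - C c * X ^ 2) * mk b = C (b 0) + C (b 1 - b 0) * X := by
  rw [sub_mul, sub_mul, one_mul, mul_assoc]
  ext (_ | _ | n)
  · simp
  · simp [coeff_X_pow_mul']
  · simp [coeff_X_pow_mul', hb]

theorem b1_genfun :
    ((1 + PowerSeries.X) * (1 - 2 * PowerSeries.X)) *
        PowerSeries.mk (fun k => (a1 (2 ^ k - 1) : ℤ)) =
      1 + 2 * (PowerSeries.X : PowerSeries ℤ) := by
  have hrec (n : ℕ) :
      (a1 (2 ^ (n + 2) - 1) : ℤ) = a1 (2 ^ (n + 1) - 1) + 2 * a1 (2 ^ n - 1) := by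
    exact_mod_cast a1_two_pow_add_two_sub_one n
  have hfactor : (1 + PowerSeries.X) * (1 - 2 * PowerSeries.X) =
      1 - PowerSeries.X - PowerSeries.C (2 : ℤ) * PowerSeries.X ^ 2 := by
    rw [map_ofNat]
    ring
  rw [hfactor, PowerSeries.one_sub_X_sub_C_mul_X_sq_mul_mk 2 _ hrec]
  simp [a1_zero, a1_one, map_ofNat]
end

section
/- Degree invariant (termination of the scheme): let p be a prime, P, Q ∈ 𝔽_p[x] with deg Q ≤ deg P, and let 0 ≤ i ≤ p−1 and 0 ≤ α ≤ p−1. Then deg R_α(Q·P^i) ≤ deg P. Hence the set of polynomials produced from Q₁ = 1 by repeatedly applying the maps Q ↦ R_α(Q·P^i) is contained in the finite set of polynomials over 𝔽_p of degree at most deg P. -/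
/-!
The `j`-th coefficient of `R_α(F)` is the `(p j + α)`-th coefficient of `F`, so
`deg R_α(F) ≤ deg F / p`. For `deg Q ≤ deg P` and `i < p` we have
`deg (Q P^i) ≤ (i + 1) deg P ≤ p deg P`, whence `deg R_α(Q P^i) ≤ deg P`. The polynomials of
degree at most `deg P` over the finite ring `ZMod p` form a finite set containing `1`, which by
this bound is closed under all the maps `Q ↦ R_α(Q P^i)`.
-/

open Polynomial

/-- The `α`-th section `R_α(F)` of a polynomial `F` over `ZMod p`:
the coefficient of `x^j` in `R_α(F)` is the coefficient of `x^{p·j+α}` in `F`. -/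
noncomputable def sect (p : ℕ) (α : ℕ) (F : (ZMod p)[X]) : (ZMod p)[X] :=
  ∑ j ∈ Finset.range (F.natDegree + 1), Polynomial.C (F.coeff (p * j + α)) * X ^ j

theorem Polynomial.finite_setOf_natDegree_le (R : Type*) [Semiring R] [Finite R] (n : ℕ) :
    {f : R[X] | f.natDegree ≤ n}.Finite := by
  have : Finite (degreeLT R (n + 1)) := .of_equiv _ (degreeLTEquiv R (n + 1)).toEquiv.symm
  refine (Set.toFinite (degreeLT R (n + 1) : Set R[X])).subset fun f hf => ?_
  rw [SetLike.mem_coe, mem_degreeLT]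
  exact (degree_le_natDegree.trans (WithBot.coe_le_coe.mpr hf)).trans_lt
    (WithBot.coe_lt_coe.mpr n.lt_succ_self)

theorem coeff_sect (p α : ℕ) (F : (ZMod p)[X]) (n : ℕ) :
    (sect p α F).coeff n = if n ≤ F.natDegree then F.coeff (p * n + α) else 0 := by
  simp only [sect, finsetSum_coeff, coeff_C_mul, coeff_X_pow, mul_ite, mul_one, mul_zero,
    Finset.sum_ite_eq, Finset.mem_range, Nat.lt_succ_iff]

theorem natDegree_sect_le {p : ℕ} (hp : 0 < p) (α : ℕ) (F : (ZMod p)[X]) :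
    (sect p α F).natDegree ≤ F.natDegree / p := by
  rw [natDegree_le_iff_coeff_eq_zero]
  intro n hn
  rw [coeff_sect, ite_eq_right_iff]
  intro _
  have : F.natDegree < p * n := by
    rw [mul_comm]
    exact (Nat.div_lt_iff_lt_mul hp).mp hn
  exact coeff_eq_zero_of_natDegree_lt (this.trans_le (Nat.le_add_right _ _))

theorem natDegree_sect_mul_pow_le {p i : ℕ} (hi : i < p) (α : ℕ) {P Q : (ZMod p)[X]}
    (hQ : Q.natDegree ≤ P.natDegree) : (sect p α (Q * P ^ i)).natDegree ≤ P.natDegree := by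
  have hdeg : (Q * P ^ i).natDegree ≤ p * P.natDegree :=
    calc (Q * P ^ i).natDegree ≤ Q.natDegree + i * P.natDegree :=
          natDegree_mul_le.trans (Nat.add_le_add_left natDegree_pow_le _)
      _ ≤ (i + 1) * P.natDegree := by linarith
      _ ≤ p * P.natDegree := Nat.mul_le_mul_right _ hi
  exact (natDegree_sect_le (by omega) α _).trans (Nat.div_le_of_le_mul hdeg)

theorem degree_invariant_general (p : ℕ) (P Q : (ZMod p)[X])
    (hQ : Q.natDegree ≤ P.natDegree) (i α : ℕ) (hi : i < p) :
    (sect p α (Q * P ^ i)).natDegree ≤ P.natDegree ∧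
    (∃ S : Finset (ZMod p)[X], (1 : (ZMod p)[X]) ∈ S ∧
      (∀ Q' ∈ S, Q'.natDegree ≤ P.natDegree) ∧
      ∀ Q' ∈ S, ∀ i' < p, ∀ α' < p, sect p α' (Q' * P ^ i') ∈ S) := by
  have : NeZero p := ⟨by omega⟩
  let S := (finite_setOf_natDegree_le (ZMod p) P.natDegree).toFinset
  refine ⟨natDegree_sect_mul_pow_le hi α hQ, S, ?_, fun Q' hQ' => ?_, fun Q' hQ' i' hi' α' _ => ?_⟩
  · simp [S]
  · simpa [S] using hQ'
  · simpa [S] using natDegree_sect_mul_pow_le hi' α' (by simpa [S] using hQ')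

theorem degree_invariant (p : ℕ) (hp : p.Prime) (P Q : (ZMod p)[X])
    (hQ : Q.natDegree ≤ P.natDegree) (i α : ℕ) (hi : i < p) (hα : α < p) :
    (sect p α (Q * P ^ i)).natDegree ≤ P.natDegree ∧
    (∃ S : Finset (ZMod p)[X], (1 : (ZMod p)[X]) ∈ S ∧
      (∀ Q' ∈ S, Q'.natDegree ≤ P.natDegree) ∧
      ∀ Q' ∈ S, ∀ i' < p, ∀ α' < p, sect p α' (Q' * P ^ i') ∈ S) :=
  degree_invariant_general p P Q hQ i α hi
end
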